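/- arXiv:1909.09916 — 5 statements merged into one kernel-verified Lean document; each statement's English description precedes it below -/
import Mathlib

section
/- Let G be a finite connected simple graph and let P = (v_0, …, v_k) be a geodesic path in G. In the game of Surrounding Cops and Robbers on G, three cops have a strategy such that, against every robber play, after a finite number of moves the robber never again occupies a vertex of P: from some time onward, the robber's position is never a vertex of P. -/
/-!
Formalization of the game of Surrounding Cops and Robbers, played on a simple
graph `G` by a cop player controlling `m` cops and a robber player controlling
one robber, with perfect information.  The cops are placed first, then the
robber is placed on a vertex not occupied by a cop; thereafter players
alternate turns (cops first), each pawn moving along an edge or staying put,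
and the robber may never end his turn on a vertex occupied by a cop.  The cop
player wins if at some point every neighbor of the robber's vertex is occupied
by a cop.
-/

/-- One step of a cop or of the robber: stay in place or move along an edge. -/
def stepRel {V : Type*} (G : SimpleGraph V) (x y : V) : Prop := x = y ∨ G.Adj x y

/-- `histList r t = [r 0, r 1, …, r (t-1)]`: the robber's first `t` positions. -/
def histList {V : Type*} (r : ℕ → V) (t : ℕ) : List V := (List.range t).map r

/-- A cop strategy for `m` cops is a function `F` assigning to each finite history of
robber positions the current positions of the cops; `F []` is the initial placement,
made before the robber is placed, and `F (h ++ [x])` is the cops' answer after the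
robber history `h` has been extended by the robber move `x`.  The strategy is valid
if each cop always moves along an edge or stays put. -/
def ValidCopStrategy {V : Type*} (G : SimpleGraph V) {m : ℕ}
    (F : List V → Fin m → V) : Prop :=
  ∀ (h : List V) (x : V) (i : Fin m), stepRel G (F h i) (F (h ++ [x]) i)

/-- An infinite robber play `r` against the cop strategy `F` is legal if the robber
always moves along an edge or stays put, and never ends a turn on a vertex occupied
by a cop (`r 0` is the robber's initial placement, chosen after the cops have been
placed at `F []`, and `r t` is chosen when the cops stand at `F (histList r t)`). -/
def LegalPlay {V : Type*} (G : SimpleGraph V) {m : ℕ}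
    (F : List V → Fin m → V) (r : ℕ → V) : Prop :=
  (∀ t, stepRel G (r t) (r (t + 1))) ∧ ∀ t, ∀ i, F (histList r t) i ≠ r t

/-- The robber is surrounded at time `t`: after the cops' move in round `t + 1`,
every neighbor of the robber's position `r t` is occupied by a cop. -/
def SurroundedAt {V : Type*} (G : SimpleGraph V) {m : ℕ}
    (F : List V → Fin m → V) (r : ℕ → V) (t : ℕ) : Prop :=
  ∀ w, G.Adj (r t) w → ∃ i, F (histList r (t + 1)) i = w

/-- `m` cops have a winning strategy in the game of Surrounding Cops and Robbers
on `G`; equivalently, the surrounding cop number satisfies `s(G) ≤ m`. -/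
def CopsWin {V : Type*} (G : SimpleGraph V) (m : ℕ) : Prop :=
  ∃ F : List V → Fin m → V, ValidCopStrategy G F ∧
    ∀ r : ℕ → V, LegalPlay G F r → ∃ t, SurroundedAt G F r t

/-!
Project the robber onto the geodesic `P = (v₀, …, v_k)` by `u ↦ min (dist v₀ u) k`. Since `P` is
geodesic, the projection sends `v_j` to `j`, and it moves by at most one per robber step. A shadow
point on `{0, …, k}` chases the projection one step per round; the gap never grows, and while it
is positive it can only stay put when the projection flees toward an end of the segment, which
cannot go on forever. Once the shadow has caught the projection it keeps it, and three cops
on `P` at the shadow and its two neighbours then occupy every vertex of `P` the robber could move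
to.
-/

def stepToward (c b : ℕ) : ℕ := if c < b then c + 1 else if b < c then c - 1 else c

lemma stepToward_eq_of_le_of_le {c b : ℕ} (hcb : c ≤ b + 1) (hbc : b ≤ c + 1) :
    stepToward c b = b := by
  unfold stepToward
  split_ifs <;> omega

/-- The gap between chaser `a` and target `b`, then the room the target has left on `{0, …, k}`
in the direction away from the chaser. -/
def pursuitMeasure (k a b : ℕ) : ℕ ×ₗ ℕ :=
  toLex (a - b + (b - a), if a ≤ b then k - b else b)

lemma pursuitMeasure_stepToward_lt {k a b b' : ℕ} (hb : b ≤ k) (hb' : b' ≤ k)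
    (hb'b : b' ≤ b + 1) (hbb' : b ≤ b' + 1) (hab : a ≠ b) :
    pursuitMeasure k (stepToward a b') b' < pursuitMeasure k a b := by
  unfold pursuitMeasure stepToward
  rw [Prod.Lex.toLex_lt_toLex]
  split_ifs <;> omega

theorem exists_forall_stepToward_eq {k : ℕ} {b c : ℕ → ℕ} (hb : ∀ t, b t ≤ k)
    (hb_succ : ∀ t, b (t + 1) ≤ b t + 1 ∧ b t ≤ b (t + 1) + 1)
    (hc : ∀ t, c (t + 1) = stepToward (c t) (b t)) :
    ∃ T, ∀ t, T ≤ t → c (t + 1) = b t := by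
  obtain ⟨T, hT⟩ := WellFounded.not_rel_apply_succ (r := (· < ·))
    fun t => pursuitMeasure k (c (t + 1)) (b t)
  have hcaught : c (T + 1) = b T := by
    by_contra hne
    refine hT ?_
    rw [hc (T + 1)]
    exact pursuitMeasure_stepToward_lt (hb T) (hb (T + 1)) (hb_succ T).1 (hb_succ T).2 hne
  refine ⟨T, fun t ht => ?_⟩
  induction t, ht using Nat.le_induction with
  | base => exact hcaught
  | succ t _ ih =>
    rw [hc (t + 1), ih]
    exact stepToward_eq_of_le_of_le (hb_succ t).2 (hb_succ t).1

section Graph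

variable {V : Type*} {G : SimpleGraph V}

lemma stepRel.symm {x y : V} (h : stepRel G x y) : stepRel G y x :=
  h.imp Eq.symm SimpleGraph.Adj.symm

lemma SimpleGraph.dist_le_dist_add_one_of_stepRel {u w : V} (h : stepRel G u w) (x : V) :
    G.dist x w ≤ G.dist x u + 1 := by
  rcases h with rfl | hadj
  · exact Nat.le_succ _
  · calc G.dist x w ≤ G.dist x u + G.dist u w := hadj.reachable.dist_triangle_right x
      _ = G.dist x u + 1 := by rw [SimpleGraph.dist_eq_one_iff_adj.mpr hadj]

namespace SimpleGraph.Walk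

lemma stepRel_getVert_succ {u v : V} (p : G.Walk u v) (n : ℕ) :
    stepRel G (p.getVert n) (p.getVert (n + 1)) := by
  by_cases hn : n < p.length
  · exact Or.inr (p.adj_getVert_succ hn)
  · exact Or.inl (by rw [p.getVert_of_length_le (by omega), p.getVert_of_length_le (by omega)])

lemma stepRel_getVert {u v : V} (p : G.Walk u v) {m n : ℕ} (hmn : m ≤ n + 1) (hnm : n ≤ m + 1) :
    stepRel G (p.getVert m) (p.getVert n) := by
  obtain rfl | rfl | rfl : m = n ∨ n = m + 1 ∨ m = n + 1 := by omega
  · exact Or.inl rfl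
  · exact p.stepRel_getVert_succ m
  · exact (p.stepRel_getVert_succ n).symm

lemma dist_eq_length_takeUntil [DecidableEq V] {u v w : V} (p : G.Walk u v)
    (hp : p.length = G.dist u v) (hw : w ∈ p.support) :
    G.dist u w = (p.takeUntil w hw).length := by
  have hsplit : (p.takeUntil w hw).length + (p.dropUntil w hw).length = p.length := by
    rw [← length_append, take_spec]
  have htake := dist_le (p.takeUntil w hw)
  have hdrop := dist_le (p.dropUntil w hw)
  have htri := (p.takeUntil w hw).reachable.dist_triangle_left v
  omega

lemma getVert_dist_of_length_eq_dist {u v w : V} (p : G.Walk u v)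
    (hp : p.length = G.dist u v) (hw : w ∈ p.support) :
    G.dist u w ≤ p.length ∧ p.getVert (G.dist u w) = w := by
  classical
  rw [p.dist_eq_length_takeUntil hp hw]
  exact ⟨p.length_takeUntil_le_length hw, p.getVert_length_takeUntil hw⟩

end SimpleGraph.Walk

def shadow (f : V → ℕ) (h : List V) : ℕ := h.foldl (fun c x => stepToward c (f x)) 0

lemma histList_succ (r : ℕ → V) (t : ℕ) : histList r (t + 1) = histList r t ++ [r t] := by
  simp [histList, List.range_succ]

/-- `shadow f h + i - 1` truncates at `0` and `getVert` stops at the end of `p`, so the cops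
stand at the shadow and its neighbours along `p`. -/
def guardStrategy {u v : V} (p : G.Walk u v) (f : V → ℕ) (h : List V) (i : Fin 3) : V :=
  p.getVert (shadow f h + i - 1)

lemma validCopStrategy_guardStrategy {u v : V} (p : G.Walk u v) (f : V → ℕ) :
    ValidCopStrategy G (guardStrategy p f) := by
  intro h x i
  unfold guardStrategy shadow
  rw [List.foldl_concat]
  apply p.stepRel_getVert <;> unfold stepToward <;> split_ifs <;> omega

lemma exists_guardStrategy_eq_getVert {u v : V} (p : G.Walk u v) (f : V → ℕ) (h : List V)
    {j : ℕ} (hj : shadow f h ≤ j + 1) (hj' : j ≤ shadow f h + 1) :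
    ∃ i, guardStrategy p f h i = p.getVert j :=
  ⟨⟨j + 1 - shadow f h, by omega⟩, by unfold guardStrategy; congr 1; simp only; omega⟩

end Graph

theorem three_cops_guard_geodesic_general {V : Type*} (G : SimpleGraph V)
    {v0 vk : V} (p : G.Walk v0 vk)
    (hgeo : p.length = G.dist v0 vk) :
    ∃ F : List V → Fin 3 → V, ValidCopStrategy G F ∧
      ∀ r : ℕ → V, LegalPlay G F r →
        ∃ T : ℕ, ∀ t, T ≤ t → r t ∉ p.support := by
  set f : V → ℕ := fun u => min (G.dist v0 u) p.length
  refine ⟨guardStrategy p f, validCopStrategy_guardStrategy p f, fun r hr => ?_⟩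
  have hf_succ (t : ℕ) : f (r (t + 1)) ≤ f (r t) + 1 ∧ f (r t) ≤ f (r (t + 1)) + 1 := by
    have h₁ := G.dist_le_dist_add_one_of_stepRel (hr.1 t) v0
    have h₂ := G.dist_le_dist_add_one_of_stepRel (hr.1 t).symm v0
    simp only [f]
    omega
  obtain ⟨T, hT⟩ := exists_forall_stepToward_eq (k := p.length) (b := fun t => f (r t))
    (c := fun t => shadow f (histList r t)) (fun t => min_le_right _ _) hf_succ
    (fun t => by simp only [histList_succ, shadow, List.foldl_concat])
  refine ⟨T + 1, fun t ht hmem => ?_⟩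
  obtain ⟨s, rfl⟩ : ∃ s, t = s + 1 := ⟨t - 1, by omega⟩
  obtain ⟨hdist, hvert⟩ := p.getVert_dist_of_length_eq_dist hgeo hmem
  have hcaught : shadow f (histList r (s + 1)) = f (r s) := hT s (by omega)
  have hproj : f (r (s + 1)) = G.dist v0 (r (s + 1)) := min_eq_left hdist
  have hnear := hf_succ s
  obtain ⟨i, hi⟩ := exists_guardStrategy_eq_getVert p f (histList r (s + 1))
    (j := G.dist v0 (r (s + 1))) (by omega) (by omega)
  exact hr.2 (s + 1) i (hi.trans hvert)

/-- Let `G` be a finite connected simple graph and let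
`P = (v_0, …, v_k)` be a geodesic path in `G`.  In the game of Surrounding Cops and
Robbers on `G`, three cops have a strategy such that, against every robber play,
after a finite number of moves the robber never again occupies a vertex of `P`. -/
theorem three_cops_guard_geodesic {V : Type*} [Fintype V] (G : SimpleGraph V)
    (hconn : G.Connected) {v0 vk : V} (p : G.Walk v0 vk) (hpath : p.IsPath)
    (hgeo : p.length = G.dist v0 vk) :
    ∃ F : List V → Fin 3 → V, ValidCopStrategy G F ∧
      ∀ r : ℕ → V, LegalPlay G F r →
        ∃ T : ℕ, ∀ t, T ≤ t → r t ∉ p.support :=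
  three_cops_guard_geodesic_general G p hgeo
end

section
/- Let G be a finite connected simple graph, let k ≥ 1, and suppose there is a nonempty set S of vertices of G such that every vertex of S has degree at least k + 1 in G and has at least k neighbors belonging to S. Then s(G) ≥ k + 1; that is, k cops do not suffice to surround the robber on G. (This robber strategy underlies the paper's lower bounds: a planar graph with s(G) ≥ 6, a toroidal graph with s(G) ≥ 7, and a bipartite toroidal graph with s(G) ≥ 5.) -/
/-!
The robber never leaves `S`. Standing on `v ∈ S`, he sees `v` and at least `k` of its
neighbours in `S`, i.e. at least `k + 1` vertices of `S` within one step, while `k` cops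
occupy at most `k` vertices; so he always has a legal move that stays in `S`. Since every
vertex of `S` has more than `k` neighbours, `k` cops can never occupy all of them.
-/

namespace SurroundingCops

variable {V : Type*} (G : SimpleGraph V)

/-- The history of robber positions generated by a robber strategy `σ`, which maps the
history so far to the robber's next position. -/
def robberHistory (σ : List V → V) : ℕ → List V
  | 0 => []
  | t + 1 => robberHistory σ t ++ [σ (robberHistory σ t)]

lemma histList_eq_robberHistory (σ : List V → V) (t : ℕ) :
    histList (fun n => σ (robberHistory σ n)) t = robberHistory σ t := by
  induction t with
  | zero => rfl
  | succ t ih => simp [histList, List.range_succ, robberHistory, ← ih]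

lemma exists_safe_step [DecidableRel G.Adj] {m : ℕ} {S : Finset V} {v : V} (hv : v ∈ S)
    (hnbr : m ≤ (S.filter (fun u => G.Adj v u)).card) (c : Fin m → V) :
    ∃ w ∈ S, stepRel G v w ∧ ∀ i, c i ≠ w := by
  classical
  set T := insert v (S.filter (fun u => G.Adj v u))
  have hcard : (Finset.univ.image c).card < T.card := by
    calc (Finset.univ.image c).card ≤ m := Finset.card_image_le.trans (by simp)
      _ < T.card := by
        rw [Finset.card_insert_of_notMem (by simp)]
        omega
  obtain ⟨w, hwT, hwc⟩ := Finset.exists_mem_notMem_of_card_lt_card hcard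
  have hfree : ∀ i, c i ≠ w := fun i hi => hwc (Finset.mem_image.2 ⟨i, by simp, hi⟩)
  rcases Finset.mem_insert.1 hwT with rfl | hw
  · exact ⟨w, hv, Or.inl rfl, hfree⟩
  · obtain ⟨hwS, hadj⟩ := Finset.mem_filter.1 hw
    exact ⟨w, hwS, Or.inr hadj, hfree⟩

lemma exists_legalPlay_forall_mem {m : ℕ} (F : List V → Fin m → V) {S : Set V}
    (hS : S.Nonempty)
    (hsafe : ∀ v ∈ S, ∀ c : Fin m → V, ∃ w ∈ S, stepRel G v w ∧ ∀ i, c i ≠ w) :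
    ∃ r, LegalPlay G F r ∧ ∀ t, r t ∈ S := by
  obtain ⟨v₀, hv₀⟩ := hS
  have hstep : ∀ v (c : Fin m → V),
      ∃ w, v ∈ S → w ∈ S ∧ stepRel G v w ∧ ∀ i, c i ≠ w := by
    intro v c
    by_cases hv : v ∈ S
    · obtain ⟨w, hw⟩ := hsafe v hv c
      exact ⟨w, fun _ => hw⟩
    · exact ⟨v, fun h => absurd h hv⟩
  choose next hnext using hstep
  -- `v₀` plays the role of the robber's position before he is placed.
  let σ : List V → V := fun h => next (h.getLastD v₀) (F h)
  let r : ℕ → V := fun n => σ (robberHistory σ n)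
  have hhist : ∀ t, histList r t = robberHistory σ t := histList_eq_robberHistory σ
  have hprev : ∀ t, (robberHistory σ (t + 1)).getLastD v₀ = r t := fun t => by
    simp [robberHistory, r]
  have hprev_mem : ∀ t, (robberHistory σ t).getLastD v₀ ∈ S := by
    intro t
    induction t with
    | zero => exact hv₀
    | succ t ih => rw [hprev]; exact (hnext _ _ ih).1
  have hmem : ∀ t, r t ∈ S := fun t => (hnext _ _ (hprev_mem t)).1
  refine ⟨r, ⟨fun t => ?_, fun t i => ?_⟩, hmem⟩
  · convert (hnext _ (F (robberHistory σ (t + 1))) (hprev_mem (t + 1))).2.1 using 1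
    exact (hprev t).symm
  · rw [hhist]
    exact (hnext _ _ (hprev_mem t)).2.2 i

lemma not_surroundedAt_of_lt_degree {m : ℕ} (F : List V → Fin m → V) (r : ℕ → V) (t : ℕ)
    [Fintype (G.neighborSet (r t))] (hdeg : m < G.degree (r t)) :
    ¬ SurroundedAt G F r t := by
  classical
  intro hsur
  have hsub : G.neighborFinset (r t) ⊆ Finset.univ.image (F (histList r (t + 1))) := by
    intro w hw
    obtain ⟨i, hi⟩ := hsur w ((G.mem_neighborFinset _ _).1 hw)
    exact Finset.mem_image.2 ⟨i, Finset.mem_univ i, hi⟩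
  have hcard := (Finset.card_le_card hsub).trans Finset.card_image_le
  rw [G.card_neighborFinset_eq_degree, Finset.card_univ, Fintype.card_fin] at hcard
  omega

end SurroundingCops

open SurroundingCops in
theorem robber_escapes_on_dense_set_general {V : Type*} [Fintype V]
    (G : SimpleGraph V) [DecidableRel G.Adj]
    (k : ℕ) (S : Finset V) (hS : S.Nonempty)
    (hdeg : ∀ v ∈ S, k + 1 ≤ G.degree v)
    (hnbr : ∀ v ∈ S, k ≤ (S.filter (fun u => G.Adj v u)).card) :
    ¬ CopsWin G k := by
  rintro ⟨F, -, hwin⟩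
  obtain ⟨r, hlegal, hmem⟩ := exists_legalPlay_forall_mem G F hS
    fun v hv c => exists_safe_step G hv (hnbr v hv) c
  obtain ⟨t, hsur⟩ := hwin r hlegal
  exact not_surroundedAt_of_lt_degree G F r t (hdeg _ (hmem t)) hsur

/-- Let `G` be a finite connected simple graph, let `k ≥ 1`, and
suppose there is a nonempty set `S` of vertices of `G` such that every vertex of `S`
has degree at least `k + 1` in `G` and has at least `k` neighbors belonging to `S`.
Then `s(G) ≥ k + 1`; that is, `k` cops do not suffice to surround the robber on `G`. -/
theorem robber_escapes_on_dense_set {V : Type*} [Fintype V] [DecidableEq V]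
    (G : SimpleGraph V) [DecidableRel G.Adj] (hconn : G.Connected)
    (k : ℕ) (hk : 1 ≤ k) (S : Finset V) (hS : S.Nonempty)
    (hdeg : ∀ v ∈ S, k + 1 ≤ G.degree v)
    (hnbr : ∀ v ∈ S, k ≤ (S.filter (fun u => G.Adj v u)).card) :
    ¬ CopsWin G k :=
  robber_escapes_on_dense_set_general G k S hS hdeg hnbr
end

section
/- Let n ≥ 4 and let G be a simple graph on vertices {v_0, …, v_{n−1}} that contains the Hamiltonian cycle v_0 v_1 ⋯ v_{n−1} v_0 and in which no two chords cross. If v_i v_j is a chord of G with 0 ≤ i < j ≤ n−1, then the graph G − {v_i, v_j} has exactly two connected components, whose vertex sets are {v_{i+1}, …, v_{j−1}} and {v_{j+1}, …, v_{n−1}, v_0, …, v_{i−1}}. -/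
/-!
Each of the two arcs `A = (i, j)` and `B = (j, i)` of the Hamiltonian cycle is connected in
`G - {v_i, v_j}` by its own cycle edges: from any vertex, keep stepping `x ↦ x + 1` until the
arc ends. An edge `uv` with `u ∈ A` and `v ∈ B` would be a chord with endpoints on both sides of
`v_i v_j`, hence would cross it; so no walk leaves `A`, and `A`, `B` are the two components.
-/

/-- For a graph `G` on `Fin n` containing all Hamiltonian-cycle edges
`v_t v_{t+1 (mod n)}`, a chord is an edge `v_a v_b` of `G` with `b ≢ a ± 1 (mod n)`. -/
def IsChord {n : ℕ} [NeZero n] (G : SimpleGraph (Fin n)) (a b : Fin n) : Prop :=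
  G.Adj a b ∧ b ≠ a + 1 ∧ a ≠ b + 1

namespace SimpleGraph

variable {V : Type*} {G : SimpleGraph V}

theorem Reachable.mem_of_forall_adj_mem {S : Set V} (hS : ∀ x y, G.Adj x y → x ∈ S → y ∈ S)
    {u v : V} (h : G.Reachable u v) (hu : u ∈ S) : v ∈ S := by
  by_contra hv
  obtain ⟨p⟩ := h
  obtain ⟨d, -, hd, hd'⟩ := p.exists_boundary_dart S hu hv
  exact hd' (hS _ _ d.adj hd)

end SimpleGraph

namespace Fin

theorem add_one_eq_zero_of_val_add_one_eq {n : ℕ} [NeZero n] {x : Fin n} (h : x.val + 1 = n) :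
    x + 1 = 0 := by
  rw [Fin.ext_iff, Fin.val_add, Fin.val_one', Nat.add_mod_mod, h, Nat.mod_self, Fin.val_zero]

end Fin

variable {n : ℕ} [NeZero n] {G : SimpleGraph (Fin n)}

-- `hstep` says that `S` is an arc of the cycle ending just before `e`.
theorem induce_reachable_of_add_one_mem_or_eq (hham : ∀ x : Fin n, G.Adj x (x + 1))
    {s S : Set (Fin n)} (hSs : S ⊆ s) {e : Fin n} (he : e ∉ S)
    (hstep : ∀ x ∈ S, x + 1 ∈ S ∨ x + 1 = e) (u v : s) (hu : ↑u ∈ S) (hv : ↑v ∈ S) :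
    (G.induce s).Reachable u v := by
  have reach_last : ∀ x : s, ↑x ∈ S → ∃ y : s, ↑y + 1 = e ∧ (G.induce s).Reachable x y := by
    intro x hx
    induction h : (e - x).val using Nat.strong_induction_on generalizing x with
    | _ k ih =>
      rcases hstep x hx with hx1 | hx1
      · have hne : e - x ≠ 0 := sub_ne_zero.mpr fun hex => he (hex ▸ hx)
        have hlt : (e - (x + 1)).val < k := by
          rw [sub_add_eq_sub_sub, Fin.val_sub_one_of_ne_zero hne]
          have := Fin.val_ne_zero_iff.mpr hne
          omega
        obtain ⟨y, hy, hreach⟩ := ih _ hlt ⟨x + 1, hSs hx1⟩ hx1 rfl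
        have hadj : (G.induce s).Adj x ⟨x + 1, hSs hx1⟩ := hham x
        exact ⟨y, hy, hadj.reachable.trans hreach⟩
      · exact ⟨x, hx1, .rfl⟩
  obtain ⟨y, hy, hu⟩ := reach_last u hu
  obtain ⟨y', hy', hv⟩ := reach_last v hv
  obtain rfl : y = y' := Subtype.ext (add_right_cancel (hy.trans hy'.symm))
  exact hu.trans hv.symm

theorem add_one_between_or_eq {i j x : Fin n} (hx : i < x ∧ x < j) :
    (i < x + 1 ∧ x + 1 < j) ∨ x + 1 = j := by
  have hx1 : (x + 1).val = x.val + 1 := Fin.val_add_one_of_lt' (by omega)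
  omega

theorem add_one_outside_or_eq {i j x : Fin n} (hx : x < i ∨ j < x) :
    (x + 1 < i ∨ j < x + 1) ∨ x + 1 = i := by
  by_cases hxn : x.val + 1 = n
  · rw [Fin.add_one_eq_zero_of_val_add_one_eq hxn]
    rcases (Fin.zero_le i).lt_or_eq with hi | hi
    exacts [.inl (.inl hi), .inr hi]
  · have hx1 : (x + 1).val = x.val + 1 := Fin.val_add_one_of_lt' (by omega)
    rcases hx with hx | hx <;> omega

theorem isChord_of_adj_of_between_of_outside {a b c d : Fin n} (hab : G.Adj a b) (hac : a < c)
    (hcb : c < b) (hd : d < a ∨ b < d) : IsChord G a b := by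
  refine ⟨hab, fun h => ?_, fun h => ?_⟩
  · have := congrArg Fin.val h
    rw [Fin.val_add_one_of_lt' (by omega)] at this
    omega
  · by_cases hb : b.val + 1 = n
    · rw [Fin.add_one_eq_zero_of_val_add_one_eq hb] at h
      subst h
      have := Fin.val_zero n
      rcases hd with hd | hd <;> omega
    · have := congrArg Fin.val h
      rw [Fin.val_add_one_of_lt' (by omega)] at this
      omega

theorem IsChord.exists_between {i j : Fin n} (h : IsChord G i j) (hij : i < j) :
    ∃ x, i < x ∧ x < j := by
  have hgap : i.val + 1 < j.val := by
    by_contra hle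
    exact h.2.1 (Fin.ext (by rw [Fin.val_add_one_of_lt' (by omega)]; omega))
  have hi1 : (i + 1).val = i.val + 1 := Fin.val_add_one_of_lt' (by omega)
  exact ⟨i + 1, by omega, by omega⟩

theorem IsChord.exists_outside {i j : Fin n} (h : IsChord G i j) : ∃ x, x < i ∨ j < x := by
  by_cases hi : i = 0
  · subst hi
    have hjn : j.val + 1 < n := by
      by_contra hle
      exact h.2.2 (Fin.add_one_eq_zero_of_val_add_one_eq (by omega)).symm
    have hj1 := Fin.val_add_one_of_lt' hjn
    exact ⟨j + 1, .inr (by omega)⟩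
  · exact ⟨0, .inl (Fin.pos_iff_ne_zero.mpr hi)⟩

theorem not_adj_across_chord
    (hnocross : ∀ a b c d : Fin n, IsChord G a b → IsChord G c d → a < c → c < b → b < d → False)
    {i j u v : Fin n} (hchord : IsChord G i j) (hu : i < u ∧ u < j) (hv : v < i ∨ j < v) :
    ¬ G.Adj u v := by
  intro huv
  rcases hv with hvi | hjv
  · exact hnocross v u i j (isChord_of_adj_of_between_of_outside huv.symm hvi hu.1 (.inr hu.2))
      hchord hvi hu.1 hu.2
  · exact hnocross i j u v hchord (isChord_of_adj_of_between_of_outside huv hu.2 hjv (.inl hu.1))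
      hu.1 hu.2 hjv

theorem chord_separates_outerplanar_general {n : ℕ} [NeZero n] (G : SimpleGraph (Fin n))
    (hham : ∀ t : Fin n, G.Adj t (t + 1))
    (hnocross : ∀ a b c d : Fin n, IsChord G a b → IsChord G c d →
      a < c → c < b → b < d → False)
    (i j : Fin n) (hij : i < j) (hchord : IsChord G i j) :
    -- the two arcs of the Hamiltonian cycle determined by `v_i` and `v_j`:
    let A : Set (Fin n) := {x | i < x ∧ x < j}
    let B : Set (Fin n) := {x | x < i ∨ j < x}
    -- the graph `G - {v_i, v_j}`:
    let s : Set (Fin n) := {x | x ≠ i ∧ x ≠ j}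
    let G' : SimpleGraph s := G.induce s
    -- `A` and `B` are nonempty, disjoint, and cover all vertices of `G - {v_i, v_j}`,
    A.Nonempty ∧ B.Nonempty ∧ (∀ x : Fin n, ¬ (x ∈ A ∧ x ∈ B)) ∧
      (∀ x : s, (x : Fin n) ∈ A ∨ (x : Fin n) ∈ B) ∧
      -- each of `A`, `B` spans a connected piece of `G - {v_i, v_j}`,
      (∀ u v : s, (u : Fin n) ∈ A → (v : Fin n) ∈ A → G'.Reachable u v) ∧
      (∀ u v : s, (u : Fin n) ∈ B → (v : Fin n) ∈ B → G'.Reachable u v) ∧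
      -- and no vertex of `A` is reachable from a vertex of `B`.
      (∀ u v : s, (u : Fin n) ∈ A → (v : Fin n) ∈ B → ¬ G'.Reachable u v) := by
  intro A B s G'
  have hAB : ∀ x : Fin n, ¬ (x ∈ A ∧ x ∈ B) := by
    rintro x ⟨⟨hix, hxj⟩, hxi | hjx⟩ <;> omega
  have hcover : ∀ x : s, (x : Fin n) ∈ A ∨ (x : Fin n) ∈ B := by
    rintro ⟨x, hxi, hxj⟩
    show (i < x ∧ x < j) ∨ (x < i ∨ j < x)
    omega
  have hA := induce_reachable_of_add_one_mem_or_eq hham (S := A) (s := s) (e := j)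
    (fun x hx => ⟨hx.1.ne', hx.2.ne⟩) (fun hj => hj.2.false) fun _ => add_one_between_or_eq
  have hB := induce_reachable_of_add_one_mem_or_eq hham (S := B) (s := s) (e := i)
    (fun x hx => by constructor <;> rcases hx with hx | hx <;> omega)
    (fun hi => by rcases hi with hi | hi <;> omega) fun _ => add_one_outside_or_eq
  have hAclosed : ∀ x y : s, G'.Adj x y → (x : Fin n) ∈ A → (y : Fin n) ∈ A :=
    fun x y hxy hx => (hcover y).resolve_right fun hy =>
      not_adj_across_chord hnocross hchord hx hy hxy
  exact ⟨hchord.exists_between hij, hchord.exists_outside, hAB, hcover, hA, hB,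
    fun u v hu hv huv =>
      hAB v ⟨huv.mem_of_forall_adj_mem (S := {x : s | (x : Fin n) ∈ A}) hAclosed hu, hv⟩⟩

/-- Let `n ≥ 4` and let `G` be a simple graph on the vertices
`v_0, …, v_{n-1}` (here `Fin n`) containing the Hamiltonian cycle
`v_0 v_1 ⋯ v_{n-1} v_0`, in which no two chords cross (chords `v_a v_b` and
`v_c v_d`, with `a < b` and `c < d`, cross when `a < c < b < d` or
`c < a < d < b`).  If `v_i v_j` is a chord with `i < j`, then the graph
`G − {v_i, v_j}` has exactly two connected components, whose vertex sets are
`{v_{i+1}, …, v_{j-1}}` and `{v_{j+1}, …, v_{n-1}, v_0, …, v_{i-1}}`. -/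
theorem chord_separates_outerplanar {n : ℕ} [NeZero n] (hn : 4 ≤ n) (G : SimpleGraph (Fin n))
    (hham : ∀ t : Fin n, G.Adj t (t + 1))
    (hnocross : ∀ a b c d : Fin n, IsChord G a b → IsChord G c d →
      a < c → c < b → b < d → False)
    (i j : Fin n) (hij : i < j) (hchord : IsChord G i j) :
    -- the two arcs of the Hamiltonian cycle determined by `v_i` and `v_j`:
    let A : Set (Fin n) := {x | i < x ∧ x < j}
    let B : Set (Fin n) := {x | x < i ∨ j < x}
    -- the graph `G - {v_i, v_j}`:
    let s : Set (Fin n) := {x | x ≠ i ∧ x ≠ j}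
    let G' : SimpleGraph s := G.induce s
    -- `A` and `B` are nonempty, disjoint, and cover all vertices of `G - {v_i, v_j}`,
    A.Nonempty ∧ B.Nonempty ∧ (∀ x : Fin n, ¬ (x ∈ A ∧ x ∈ B)) ∧
      (∀ x : s, (x : Fin n) ∈ A ∨ (x : Fin n) ∈ B) ∧
      -- each of `A`, `B` spans a connected piece of `G - {v_i, v_j}`,
      (∀ u v : s, (u : Fin n) ∈ A → (v : Fin n) ∈ A → G'.Reachable u v) ∧
      (∀ u v : s, (u : Fin n) ∈ B → (v : Fin n) ∈ B → G'.Reachable u v) ∧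
      -- and no vertex of `A` is reachable from a vertex of `B`.
      (∀ u v : s, (u : Fin n) ∈ A → (v : Fin n) ∈ B → ¬ G'.Reachable u v) :=
  chord_separates_outerplanar_general G hham hnocross i j hij hchord
end

section
/- Let G be a finite connected simple graph admitting an outerplanar (one-page) layout: an enumeration v_0, …, v_{n−1} of its vertices such that there are no two edges v_a v_b and v_c v_d of G with a < c < b < d. Then s(G) ≤ 3; that is, three cops suffice to surround the robber on G. -/
/-!
The cops keep the robber trapped in an interval of the layout: two guards sit on vertices `a` and
`b`, and every vertex the robber can reach without passing through them lies strictly between `a`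
and `b`. As `G` is connected, the robber's region is adjacent to `a` or `b`, so one of them has a
neighbour inside the interval; the pivot `m` is the innermost such neighbour (the rightmost one of
`a` or the leftmost one of `b`). The third cop walks to `m`. Since no two edges cross, once a cop
stands on `m` the robber is trapped in `(a, m)` or in `(m, b)`, whichever side he is on, and the
guard of the other side becomes the new walker. Every round either brings the walker closer to the
pivot or shrinks the interval, so the robber eventually runs out of legal moves.
-/

open Relation OrderDual

namespace OuterplanarCops

variable {V α : Type*} [LinearOrder α]

theorem histList_succ (r : ℕ → V) (t : ℕ) : histList r (t + 1) = histList r t ++ [r t] := by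
  simp [histList, List.range_succ]

/-- A robber with no legal move admits no infinite `LegalPlay`, so it suffices that every step of a
legal play strictly decreases a well-founded measure. -/
theorem copsWin_of_measure {G : SimpleGraph V} {m : ℕ} {S β : Type*} [Preorder β]
    [WellFoundedLT β] (pos : S → Fin m → V) (next : S → V → S) (s₀ : S)
    (I : S → V → Prop) (μ : S → β)
    (hvalid : ∀ s x i, stepRel G (pos s i) (pos (next s x) i))
    (hinit : ∀ x, (∀ i, pos s₀ i ≠ x) → I s₀ x)
    (hstep : ∀ s x x', I s x → (∀ i, pos s i ≠ x) → stepRel G x x' →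
      (∀ i, pos (next s x) i ≠ x') → I (next s x) x' ∧ μ (next s x) < μ s) :
    CopsWin G m := by
  refine ⟨fun h => pos (h.foldl next s₀), fun h x i => ?_, fun r ⟨hmove, havoid⟩ => ?_⟩
  · simpa only [List.foldl_append, List.foldl_cons, List.foldl_nil] using hvalid _ x i
  exfalso
  set s : ℕ → S := fun t => (histList r t).foldl next s₀ with hs
  have hs_succ (t : ℕ) : s (t + 1) = next (s t) (r t) := by
    simp only [hs, histList_succ, List.foldl_append, List.foldl_cons, List.foldl_nil]
  have havoid_succ (t : ℕ) : ∀ i, pos (next (s t) (r t)) i ≠ r (t + 1) :=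
    hs_succ t ▸ havoid (t + 1)
  have hinv (t : ℕ) : I (s t) (r t) := by
    induction t with
    | zero => exact hinit _ (havoid 0)
    | succ t ih =>
      rw [hs_succ]
      exact (hstep _ _ _ ih (havoid t) (hmove t) (havoid_succ t)).1
  obtain ⟨t, ht⟩ := WellFounded.not_rel_apply_succ (r := (· < ·)) (μ ∘ s)
  rw [Function.comp_apply, Function.comp_apply, hs_succ] at ht
  exact ht (hstep _ _ _ (hinv t) (havoid t) (hmove t) (havoid_succ t)).2

section Layout

variable (G : SimpleGraph V) (k : V → α)

def NoCross : Prop :=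
  ∀ ⦃x y u w : V⦄, G.Adj x y → G.Adj u w → k x < k u → k u < k y → k y < k w → False

def TrappedIn (a b ρ : V) : Prop :=
  ∀ x, ReflTransGen (fun u v => G.Adj u v ∧ v ≠ a ∧ v ≠ b) ρ x → k a < k x ∧ k x < k b

def IsPivot (a b m : V) : Prop :=
  (k a < k m ∧ k m < k b) ∧
    ((G.Adj a m ∧ ∀ z, G.Adj a z → k z < k b → k z ≤ k m) ∨
      (G.Adj b m ∧ ∀ z, G.Adj b z → k a < k z → k m ≤ k z))

variable {G k}

theorem NoCross.dual (h : NoCross G k) : NoCross G (toDual ∘ k) :=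
  fun _ _ _ _ hxy huw h₁ h₂ h₃ => h huw.symm hxy.symm h₃ h₂ h₁

theorem trappedIn_dual_iff {a b ρ : V} : TrappedIn G (toDual ∘ k) b a ρ ↔ TrappedIn G k a b ρ := by
  simp only [TrappedIn, Function.comp_apply, toDual_lt_toDual, and_comm]

theorem isPivot_dual_iff {a b m : V} : IsPivot G (toDual ∘ k) b a m ↔ IsPivot G k a b m := by
  simp only [IsPivot, Function.comp_apply, toDual_lt_toDual, toDual_le_toDual, and_comm, or_comm]

namespace TrappedIn

variable {a b ρ : V}

theorem lt (h : TrappedIn G k a b ρ) : k a < k ρ ∧ k ρ < k b :=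
  h ρ .refl

theorem step (h : TrappedIn G k a b ρ) {ρ' : V} (hs : stepRel G ρ ρ') (ha : ρ' ≠ a)
    (hb : ρ' ≠ b) : TrappedIn G k a b ρ' := by
  rcases hs with rfl | hadj
  · exact h
  · exact fun x hx => h x (.head ⟨hadj, ha, hb⟩ hx)

theorem of_adj (hcr : NoCross G k) (hk : Function.Injective k) (hab : G.Adj a b)
    (hρ : k a < k ρ ∧ k ρ < k b) : TrappedIn G k a b ρ := by
  intro x hx
  induction hx with
  | refl => exact hρ
  | @tail y z _ hyz ih =>
    obtain ⟨hyz, hza, hzb⟩ := hyz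
    have hza' : k a < k z := by
      rcases lt_trichotomy (k z) (k a) with h | h | h
      · exact (hcr hyz.symm hab h ih.1 ih.2).elim
      · exact (hza (hk h)).elim
      · exact h
    refine ⟨hza', ?_⟩
    rcases lt_trichotomy (k z) (k b) with h | h | h
    · exact h
    · exact (hzb (hk h)).elim
    · exact (hcr hab hyz ih.1 ih.2 h).elim

/-- An escape from `(a, m)` would either cross the edge `b m` or reach `b` from a neighbour of `b`
left of `m`. -/
theorem shrink_of_adj (hcr : NoCross G k) (hk : Function.Injective k)
    (hS : TrappedIn G k a b ρ) {m : V} (hbm : G.Adj b m) (hmb : k m < k b)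
    (hmin : ∀ z, G.Adj b z → k a < k z → k m ≤ k z) (hρ : k ρ < k m) :
    TrappedIn G k a m ρ := by
  suffices ∀ x, ReflTransGen (fun u v => G.Adj u v ∧ v ≠ a ∧ v ≠ m) ρ x →
      k x < k m ∧ ReflTransGen (fun u v => G.Adj u v ∧ v ≠ a ∧ v ≠ b) ρ x from
    fun x hx => ⟨(hS x (this x hx).2).1, (this x hx).1⟩
  intro x hx
  induction hx with
  | refl => exact ⟨hρ, .refl⟩
  | @tail y z _ hyz ih =>
    obtain ⟨hyz, hza, hzm⟩ := hyz
    obtain ⟨hym, hy⟩ := ih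
    have hzb : z ≠ b := by
      rintro rfl
      exact (hmin y hyz.symm (hS y hy).1).not_gt hym
    have hz := hy.tail ⟨hyz, hza, hzb⟩
    refine ⟨?_, hz⟩
    rcases lt_trichotomy (k z) (k m) with h | h | h
    · exact h
    · exact (hzm (hk h)).elim
    · exact (hcr hyz hbm.symm hym h (hS z hz).2).elim

theorem of_isPivot_left (hcr : NoCross G k) (hk : Function.Injective k)
    (hS : TrappedIn G k a b ρ) {m : V} (hm : IsPivot G k a b m) (hρ : k ρ < k m) :
    TrappedIn G k a m ρ := by
  obtain ⟨⟨-, hmb⟩, ⟨ham, -⟩ | ⟨hbm, hmin⟩⟩ := hm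
  · exact of_adj hcr hk ham ⟨hS.lt.1, hρ⟩
  · exact hS.shrink_of_adj hcr hk hbm hmb hmin hρ

theorem of_isPivot_right (hcr : NoCross G k) (hk : Function.Injective k)
    (hS : TrappedIn G k a b ρ) {m : V} (hm : IsPivot G k a b m) (hρ : k m < k ρ) :
    TrappedIn G k m b ρ :=
  trappedIn_dual_iff.1 <| (trappedIn_dual_iff.2 hS).of_isPivot_left hcr.dual
    (toDual.injective.comp hk) (isPivot_dual_iff.2 hm) hρ

theorem exists_adj_guard (hG : G.Connected) (hS : TrappedIn G k a b ρ) :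
    ∃ x, (k a < k x ∧ k x < k b) ∧ (G.Adj a x ∨ G.Adj b x) := by
  obtain ⟨d, -, hd, hd'⟩ := (hG.preconnected ρ a).some.exists_boundary_dart
    {x | ReflTransGen (fun u v => G.Adj u v ∧ v ≠ a ∧ v ≠ b) ρ x} .refl
    (fun h => (hS a h).1.false)
  have hguard : d.snd = a ∨ d.snd = b := by
    by_contra! h
    exact hd' (.tail hd ⟨d.adj, h⟩)
  refine ⟨d.fst, hS _ hd, ?_⟩
  rcases hguard with h | h
  · exact .inl (h ▸ d.adj.symm)
  · exact .inr (h ▸ d.adj.symm)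

end TrappedIn

theorem trappedIn_of_forall_le (hk : Function.Injective k) {a b ρ : V} (ha : ∀ z, k a ≤ k z)
    (hb : ∀ z, k z ≤ k b) (hρa : ρ ≠ a) (hρb : ρ ≠ b) : TrappedIn G k a b ρ := by
  intro x hx
  obtain ⟨hxa, hxb⟩ : x ≠ a ∧ x ≠ b := by
    rcases hx.cases_tail with rfl | ⟨_, _, _, h⟩
    · exact ⟨hρa, hρb⟩
    · exact h
  exact ⟨(ha x).lt_of_ne (hk.ne hxa.symm), (hb x).lt_of_ne (hk.ne hxb)⟩

theorem exists_isPivot_of_adj [Fintype V] {a b x : V} (hax : G.Adj a x)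
    (hx : k a < k x ∧ k x < k b) : ∃ m, IsPivot G k a b m := by
  classical
  obtain ⟨m, hm, hmax⟩ := Finset.exists_max_image
    (Finset.univ.filter fun z => G.Adj a z ∧ k a < k z ∧ k z < k b) k
    ⟨x, by simpa using ⟨hax, hx⟩⟩
  simp only [Finset.mem_filter, Finset.mem_univ, true_and] at hm hmax
  refine ⟨m, hm.2, .inl ⟨hm.1, fun z haz hzb => ?_⟩⟩
  by_cases hza : k a < k z
  · exact hmax z ⟨haz, hza, hzb⟩
  · exact (not_lt.1 hza).trans hm.2.1.le

theorem TrappedIn.exists_isPivot [Fintype V] (hG : G.Connected) {a b ρ : V}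
    (hS : TrappedIn G k a b ρ) : ∃ m, IsPivot G k a b m := by
  obtain ⟨x, hx, hax | hbx⟩ := hS.exists_adj_guard hG
  · exact exists_isPivot_of_adj hax hx
  · obtain ⟨m, hm⟩ := exists_isPivot_of_adj (k := toDual ∘ k) hbx ⟨hx.2, hx.1⟩
    exact ⟨m, isPivot_dual_iff.1 hm⟩

end Layout

section Walker

variable {G : SimpleGraph V}

theorem exists_adj_dist_lt (hG : G.Connected) {u v : V} (huv : u ≠ v) :
    ∃ w, G.Adj u w ∧ G.dist w v < G.dist u v := by
  obtain ⟨p, hp⟩ := hG.exists_walk_length_eq_dist u v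
  cases p with
  | nil => exact (huv rfl).elim
  | cons h q =>
    refine ⟨_, h, (SimpleGraph.dist_le q).trans_lt ?_⟩
    rw [← hp, SimpleGraph.Walk.length_cons]
    exact Nat.lt_succ_self _

variable (G) in
open Classical in
noncomputable def stepToward (u v : V) : V :=
  if h : ∃ w, G.Adj u w ∧ G.dist w v < G.dist u v then h.choose else u

theorem stepRel_stepToward (u v : V) : stepRel G u (stepToward G u v) := by
  unfold stepToward
  split_ifs with h
  · exact .inr h.choose_spec.1
  · exact .inl rfl

theorem dist_stepToward_lt (hG : G.Connected) {u v : V} (huv : u ≠ v) :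
    G.dist (stepToward G u v) v < G.dist u v := by
  have h := exists_adj_dist_lt hG huv
  rw [stepToward, dif_pos h]
  exact h.choose_spec.2

end Walker

section Strategy

variable (G : SimpleGraph V) (k : V → α)

open Classical in
noncomputable def pivot (a b : V) : V :=
  if h : ∃ m, IsPivot G k a b m then h.choose else a

theorem isPivot_pivot {a b : V} (h : ∃ m, IsPivot G k a b m) : IsPivot G k a b (pivot G k a b) := by
  rw [pivot, dif_pos h]
  exact h.choose_spec

def between [Fintype V] (a b : V) : Finset V :=
  Finset.univ.filter fun z => k a < k z ∧ k z < k b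

variable {k} in
theorem card_between_lt [Fintype V] {a b a' b' m : V} (ha : k a ≤ k a') (hb : k b' ≤ k b)
    (hm : k a < k m ∧ k m < k b) (hm' : ¬(k a' < k m ∧ k m < k b')) :
    (between k a' b').card < (between k a b).card := by
  refine Finset.card_lt_card ((Finset.ssubset_iff_of_subset ?_).2 ⟨m, ?_, ?_⟩)
  · exact Finset.monotone_filter_right _ fun z _ hz => ⟨ha.trans_lt hz.1, hz.2.trans_le hb⟩
  · simpa [between] using hm
  · simpa [between] using hm'

/-- Cops `role 0` and `role 1` guard the ends of the robber's interval, and cop `role 2` walks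
towards its pivot. -/
structure CopState (V : Type*) where
  pos : Fin 3 → V
  role : Equiv.Perm (Fin 3)

namespace CopState

variable (s : CopState V)

def guardL : V := s.pos (s.role 0)

def guardR : V := s.pos (s.role 1)

def walker : V := s.pos (s.role 2)

noncomputable def target : V := pivot G k s.guardL s.guardR

open Classical in
noncomputable def advance (v : V) : CopState V := ⟨Function.update s.pos (s.role 2) v, s.role⟩

theorem guardL_advance (v : V) : (s.advance v).guardL = s.guardL :=
  Function.update_of_ne (s.role.injective.ne (by decide)) _ _

theorem guardR_advance (v : V) : (s.advance v).guardR = s.guardR :=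
  Function.update_of_ne (s.role.injective.ne (by decide)) _ _

theorem walker_advance (v : V) : (s.advance v).walker = v :=
  Function.update_self _ _ _

theorem target_advance (v : V) : (s.advance v).target G k = s.target G k := by
  rw [target, target, guardL_advance, guardR_advance]

open Classical in
/-- On reaching the pivot, the walker replaces the guard on the far side of the robber, and that
guard becomes the walker. -/
noncomputable def next (x : V) : CopState V :=
  if s.walker = s.target G k then
    if k x < k s.walker then ⟨s.pos, (Equiv.swap 1 2).trans s.role⟩
    else ⟨s.pos, (Equiv.swap 0 2).trans s.role⟩
  else s.advance (stepToward G s.walker (s.target G k))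

noncomputable def measure [Fintype V] : ℕ ×ₗ ℕ :=
  toLex ((between k s.guardL s.guardR).card, G.dist s.walker (s.target G k))

theorem stepRel_next (x : V) (i : Fin 3) : stepRel G (s.pos i) ((s.next G k x).pos i) := by
  unfold next
  split_ifs
  · exact .inl rfl
  · exact .inl rfl
  · rcases eq_or_ne i (s.role 2) with rfl | hi
    · change stepRel G s.walker (s.advance _).walker
      rw [walker_advance]
      exact stepRel_stepToward _ _
    · exact .inl (Function.update_of_ne hi _ _).symm

variable {G k}

theorem trappedIn_next_and_measure_lt [Fintype V] (hG : G.Connected) (hcr : NoCross G k) (hk : Function.Injective k)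
    {x x' : V} (hS : TrappedIn G k s.guardL s.guardR x) (hx : ∀ i, s.pos i ≠ x)
    (hs : stepRel G x x') (hx' : ∀ i, (s.next G k x).pos i ≠ x') :
    TrappedIn G k (s.next G k x).guardL (s.next G k x).guardR x' ∧
      (s.next G k x).measure G k < s.measure G k := by
  have hpiv : IsPivot G k s.guardL s.guardR (s.target G k) :=
    isPivot_pivot G k (hS.exists_isPivot hG)
  unfold next at hx' ⊢
  split_ifs at hx' ⊢ with hw hlt
  · change TrappedIn G k s.guardL s.walker x' ∧
      toLex ((between k s.guardL s.walker).card, _) < toLex ((between k s.guardL s.guardR).card, _)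
    rw [← hw] at hpiv
    refine ⟨(hS.of_isPivot_left hcr hk hpiv hlt).step hs (hx' _).symm (hx' _).symm,
      Prod.Lex.toLex_lt_toLex.2 (.inl ?_)⟩
    exact card_between_lt le_rfl hpiv.1.2.le hpiv.1 fun h => h.2.false
  · change TrappedIn G k s.walker s.guardR x' ∧
      toLex ((between k s.walker s.guardR).card, _) < toLex ((between k s.guardL s.guardR).card, _)
    rw [← hw] at hpiv
    have hgt : k s.walker < k x :=
      (le_of_not_gt hlt).lt_of_ne (hk.ne (hx (s.role 2)))
    refine ⟨(hS.of_isPivot_right hcr hk hpiv hgt).step hs (hx' _).symm (hx' _).symm,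
      Prod.Lex.toLex_lt_toLex.2 (.inl ?_)⟩
    exact card_between_lt hpiv.1.1.le le_rfl hpiv.1 fun h => h.1.false
  · have hL' : (s.advance _).guardL ≠ x' := hx' (s.role 0)
    have hR' : (s.advance _).guardR ≠ x' := hx' (s.role 1)
    simp only [measure, guardL_advance, guardR_advance, walker_advance, target_advance] at hL' hR' ⊢
    exact ⟨hS.step hs hL'.symm hR'.symm,
      Prod.Lex.toLex_lt_toLex.2 (.inr ⟨rfl, dist_stepToward_lt hG hw⟩)⟩

end CopState

end Strategy

theorem copsWin_three_of_noCross [Fintype V] {G : SimpleGraph V} {k : V → α} (hG : G.Connected)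
    (hk : Function.Injective k) (hcr : NoCross G k) : CopsWin G 3 := by
  have := hG.nonempty
  obtain ⟨a, ha⟩ := Finite.exists_min k
  obtain ⟨b, hb⟩ := Finite.exists_max k
  exact copsWin_of_measure CopState.pos (CopState.next G k) ⟨![a, b, a], 1⟩
    (fun s x => TrappedIn G k s.guardL s.guardR x) (fun s => s.measure G k)
    (fun s => s.stepRel_next G k)
    (fun _ hx => trappedIn_of_forall_le hk ha hb (hx 0).symm (hx 1).symm)
    (fun s _ _ hS hx hs hx' => s.trappedIn_next_and_measure_lt hG hcr hk hS hx hs hx')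

end OuterplanarCops

/-- Let `G` be a finite connected simple graph admitting an
outerplanar (one-page) layout: an enumeration `v_0, …, v_{n-1}` of its vertices
such that there are no two edges `v_a v_b` and `v_c v_d` of `G` with
`a < c < b < d`.  Then `s(G) ≤ 3`; that is, three cops suffice to surround the
robber on `G`. -/
theorem outerplanar_three_cops {V : Type*} [Fintype V] (G : SimpleGraph V)
    (hconn : G.Connected) (n : ℕ) (e : Fin n ≃ V)
    (hlayout : ∀ a b c d : Fin n, a < c → c < b → b < d →
      G.Adj (e a) (e b) → G.Adj (e c) (e d) → False) :
    CopsWin G 3 := by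
  refine OuterplanarCops.copsWin_three_of_noCross hconn e.symm.injective ?_
  intro x y u w hxy huw h₁ h₂ h₃
  exact hlayout _ _ _ _ h₁ h₂ h₃ (by simpa using hxy) (by simpa using huw)
end

section
/- Let n ≥ 4 and let G be a simple graph on vertices {v_0, …, v_{n−1}} that contains the Hamiltonian cycle v_0 v_1 ⋯ v_{n−1} v_0 and in which no two chords cross. Suppose that in the game of Surrounding Cops and Robbers on G a position is reached in which two cops occupy the endpoints of an edge v_i v_j of G and the robber occupies a vertex of the arc X = {v_{i+1}, …, v_{j−1}} (indices modulo n). Then the cop player, using these two cops together with one additional cop, has a strategy guaranteeing that the robber never occupies a vertex outside X, and that after a finite number of moves either the robber is surrounded or a position is reached in which two cops occupy the endpoints of an edge v_k v_l of G and the robber occupies a vertex of the arc {v_{k+1}, …, v_{l−1}}, which is a proper subset of X. -/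
/-- The arc `{v_{a+1}, …, v_{b-1}}` (indices modulo `n`) of the Hamiltonian cycle
`v_0 v_1 ⋯ v_{n-1} v_0`: the vertices strictly between `a` and `b` when going
around the cycle from `a` towards `b`. -/
def cycArc (n : ℕ) [NeZero n] (a b : Fin n) : Set (Fin n) :=
  {x | 0 < (x - a).val ∧ (x - a).val < (b - a).val}

/-- A legal robber play starting from a reached position: the robber stands at `r0`
(with the cops at `F []`, about to move), always moves along an edge or stays, and
never ends a turn on a vertex occupied by a cop. -/
def LegalPlayFrom {V : Type*} (G : SimpleGraph V) {m : ℕ}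
    (F : List V → Fin m → V) (r0 : V) (r : ℕ → V) : Prop :=
  r 0 = r0 ∧ (∀ t, stepRel G (r t) (r (t + 1))) ∧
    ∀ t, ∀ i, F (histList r (t + 1)) i ≠ r (t + 1)

/-!
Two cops on the ends `a`, `b` of an edge seal the arc between them: as chords do not cross,
every edge leaving the arc ends at `a` or `b`, so the robber cannot leave it.  The third cop walks
along the cycle to the neighbour `g` of `a` in the arc farthest from `a`.  The robber is then in the
arc from `a` to `g`, sealed by the edge `a g`, or in the arc from `g` to `b`, which is sealed as
well; the cop on the far end is released and becomes the free cop.  Every round lowers the length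
of the territory or the free cop's distance to its target, so the robber eventually has no legal
move: no legal robber play against this strategy exists.
-/

namespace OuterplanarSurrounding

variable {n : ℕ}

theorem sub_val_cases (a v : Fin n) :
    (a ≤ v ∧ (v - a).val = v.val - a.val) ∨ (v < a ∧ (v - a).val = n + v.val - a.val) := by
  rcases le_or_gt a v with h | h
  · exact Or.inl ⟨h, Fin.coe_sub_iff_le.mpr h⟩
  · exact Or.inr ⟨h, Fin.coe_sub_iff_lt.mpr h⟩

section

variable [NeZero n] {G : SimpleGraph (Fin n)}

theorem sub_val_sub_of_le {a g x : Fin n} (h : (g - a).val ≤ (x - a).val) :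
    (x - g).val = (x - a).val - (g - a).val := by
  rw [← Fin.coe_sub_iff_le.mpr (Fin.le_def.mpr h), sub_sub_sub_cancel_right]

theorem sub_val_eq_zero_iff {a x : Fin n} : (x - a).val = 0 ↔ x = a := by
  rw [Fin.val_eq_zero_iff, sub_eq_zero]

theorem eq_of_sub_val_eq {a x y : Fin n} (h : (x - a).val = (y - a).val) : x = y :=
  sub_left_inj.mp (Fin.ext h)

theorem sub_add_one_val_lt {g p : Fin n} (h : p ≠ g) : (g - (p + 1)).val < (g - p).val := by
  have hd : 1 ≤ (g - p).val :=
    Nat.one_le_iff_ne_zero.mpr fun e => h (sub_val_eq_zero_iff.mp e).symm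
  have hone : (1 : Fin n).val = 1 := by
    rw [Fin.val_one']; exact Nat.mod_eq_of_lt (by have := (g - p).isLt; omega)
  rw [← sub_sub, Fin.coe_sub_iff_le.mpr (Fin.le_def.mpr (hone ▸ hd)), hone]
  omega

theorem add_one_mem_cycArc {a b x : Fin n} (hx : x ∈ cycArc n a b) : a + 1 ∈ cycArc n a b := by
  obtain ⟨h0, hb⟩ := hx
  have : (1 : Fin n).val = 1 := by
    rw [Fin.val_one']; exact Nat.mod_eq_of_lt (by have := (b - a).isLt; omega)
  simp only [cycArc, Set.mem_ofPred_eq, add_sub_cancel_left, this]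
  omega

theorem mem_cycArc_right_iff {a b g x : Fin n} (hg : g ∈ cycArc n a b) :
    x ∈ cycArc n g b ↔ x ∈ cycArc n a b ∧ (g - a).val < (x - a).val := by
  have hxg : (x - g).val = ((x - a) - (g - a)).val := by rw [sub_sub_sub_cancel_right]
  have hbg : (b - g).val = (b - a).val - (g - a).val := sub_val_sub_of_le hg.2.le
  obtain ⟨hg0, hgb⟩ := hg
  have := (x - a).isLt
  simp only [cycArc, Set.mem_ofPred_eq, hxg, hbg]
  rcases sub_val_cases (g - a) (x - a) with ⟨h1, h2⟩ | ⟨h1, h2⟩ <;>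
    simp only [Fin.le_def, Fin.lt_def] at h1 <;> simp only [h2] <;> omega

def ArcSealed (G : SimpleGraph (Fin n)) (a b : Fin n) : Prop :=
  ∀ x ∈ cycArc n a b, ∀ y, G.Adj x y → y ∈ cycArc n a b ∨ y = a ∨ y = b

theorem ArcSealed.mem_of_stepRel {a b x y : Fin n} (h : ArcSealed G a b)
    (hx : x ∈ cycArc n a b) (hxy : stepRel G x y) (ha : y ≠ a) (hb : y ≠ b) :
    y ∈ cycArc n a b := by
  rcases hxy with rfl | hxy
  · exact hx
  · exact (h x hx y hxy).resolve_right (not_or.mpr ⟨ha, hb⟩)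

def NoCrossingChords (G : SimpleGraph (Fin n)) : Prop :=
  ∀ a b c d : Fin n, IsChord G a b → IsChord G c d → a < c → c < b → b < d → False

theorem isChord_of_two_le {u v : Fin n} (h : G.Adj u v) (huv : 2 ≤ (v - u).val)
    (hvu : 2 ≤ (u - v).val) : IsChord G u v := by
  have hone : (1 : Fin n).val < 2 := by
    rw [Fin.val_one']; exact (Nat.mod_le 1 n).trans_lt one_lt_two
  refine ⟨h, fun e => ?_, fun e => ?_⟩
  · rw [e, add_sub_cancel_left] at huv; omega
  · rw [e, add_sub_cancel_left] at hvu; omega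

theorem NoCrossingChords.not_adj_of_lt (hG : NoCrossingChords G) {a b c d : Fin n}
    (hac : a < c) (hcb : c < b) (hbd : b < d) (hab : G.Adj a b) : ¬ G.Adj c d := by
  intro hcd
  have := d.isLt
  refine hG a b c d (isChord_of_two_le hab ?_ ?_) (isChord_of_two_le hcd ?_ ?_) hac hcb hbd
  · rw [Fin.coe_sub_iff_le.mpr (hac.trans hcb).le]; omega
  · rw [Fin.coe_sub_iff_lt.mpr (hac.trans hcb)]; omega
  · rw [Fin.coe_sub_iff_le.mpr (hcb.trans hbd).le]; omega
  · rw [Fin.coe_sub_iff_lt.mpr (hcb.trans hbd)]; omega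

/-- Chords `a b` and `x y` whose endpoints alternate around the cycle cannot coexist: one of
the four rotations of `a, x, b, y` is increasing, and that is a crossing pair. -/
theorem NoCrossingChords.not_adj_of_mem_cycArc (hG : NoCrossingChords G) {a b x y : Fin n}
    (hab : G.Adj a b) (hx : x ∈ cycArc n a b) (hb : b ∈ cycArc n a y) : ¬ G.Adj x y := by
  intro hxy
  obtain ⟨hx0, hxb⟩ := hx
  obtain ⟨-, hby⟩ := hb
  have := y.isLt
  rcases sub_val_cases a x with ⟨h1, h2⟩ | ⟨h1, h2⟩ <;>
    rcases sub_val_cases a b with ⟨h3, h4⟩ | ⟨h3, h4⟩ <;>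
    rcases sub_val_cases a y with ⟨h5, h6⟩ | ⟨h5, h6⟩ <;>
    first
    | omega
    | exact hG.not_adj_of_lt (by omega : a < x) (by omega : x < b) (by omega : b < y) hab hxy
    | exact hG.not_adj_of_lt (by omega : x < b) (by omega : b < y) (by omega : y < a) hxy hab.symm
    | exact hG.not_adj_of_lt (by omega : b < y) (by omega : y < a) (by omega : a < x) hab.symm
        hxy.symm
    | exact hG.not_adj_of_lt (by omega : y < a) (by omega : a < x) (by omega : x < b) hxy.symm hab

theorem NoCrossingChords.arcSealed (hG : NoCrossingChords G) {a b : Fin n} (hab : G.Adj a b) :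
    ArcSealed G a b := by
  intro x hx y hxy
  by_contra! h
  obtain ⟨hyab, hya, hyb⟩ := h
  have hy0 : (y - a).val ≠ 0 := fun e => hya (sub_val_eq_zero_iff.mp e)
  have hyb' : (y - a).val ≠ (b - a).val := fun e => hyb (eq_of_sub_val_eq e)
  have hby : (b - a).val < (y - a).val := by
    simp only [cycArc, Set.mem_ofPred_eq, not_and, not_lt] at hyab
    have := hyab (Nat.pos_of_ne_zero hy0)
    omega
  exact hG.not_adj_of_mem_cycArc hab hx ⟨hx.1.trans hx.2, hby⟩ hxy

open Classical in
noncomputable def nbrsInArc (G : SimpleGraph (Fin n)) (a b : Fin n) : Finset (Fin n) :=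
  Finset.univ.filter fun w => G.Adj a w ∧ w ∈ cycArc n a b

theorem mem_nbrsInArc {a b w : Fin n} :
    w ∈ nbrsInArc G a b ↔ G.Adj a w ∧ w ∈ cycArc n a b := by
  simp [nbrsInArc]

/-- The neighbour of `a` in the arc from `a` to `b` lying farthest from `a` along the arc,
or `a` if there is none. -/
noncomputable def farthestNbr (G : SimpleGraph (Fin n)) (a b : Fin n) : Fin n :=
  if h : (nbrsInArc G a b).Nonempty then
    ((nbrsInArc G a b).exists_max_image (fun w => (w - a).val) h).choose
  else a

theorem farthestNbr_spec {a b w : Fin n} (haw : G.Adj a w) (hw : w ∈ cycArc n a b) :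
    G.Adj a (farthestNbr G a b) ∧ farthestNbr G a b ∈ cycArc n a b ∧
      ∀ v, G.Adj a v → v ∈ cycArc n a b → (v - a).val ≤ (farthestNbr G a b - a).val := by
  have hS : (nbrsInArc G a b).Nonempty := ⟨w, mem_nbrsInArc.mpr ⟨haw, hw⟩⟩
  obtain ⟨hmem, hmax⟩ :=
    ((nbrsInArc G a b).exists_max_image (fun w => (w - a).val) hS).choose_spec
  rw [farthestNbr, dif_pos hS]
  exact ⟨(mem_nbrsInArc.mp hmem).1, (mem_nbrsInArc.mp hmem).2,
    fun v hav hv => hmax v (mem_nbrsInArc.mpr ⟨hav, hv⟩)⟩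

/-- Cutting the arc at the farthest neighbour `g` of `a`: the part beyond `g` stays sealed,
since an edge from it back into the arc from `a` to `g` would cross the chord `a g`, and an
edge from it to `a` would contradict the choice of `g`. -/
theorem ArcSealed.of_farthest (hG : NoCrossingChords G) {a b g : Fin n} (h : ArcSealed G a b)
    (hag : G.Adj a g) (hg : g ∈ cycArc n a b)
    (hmax : ∀ v, G.Adj a v → v ∈ cycArc n a b → (v - a).val ≤ (g - a).val) :
    ArcSealed G g b := by
  intro x hx y hxy
  obtain ⟨hxab, hgx⟩ := (mem_cycArc_right_iff hg).mp hx
  rcases h x hxab y hxy with hy | rfl | rfl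
  · rcases lt_trichotomy (y - a).val (g - a).val with hyg | hyg | hyg
    · have hyag : y ∈ cycArc n a g := ⟨hy.1, hyg⟩
      rcases hG.arcSealed hag y hyag x hxy.symm with hx' | rfl | rfl
      · exact absurd hx'.2 hgx.not_gt
      · exact absurd hxab.1 (by simp)
      · exact absurd hgx (lt_irrefl _)
    · exact Or.inr (Or.inl (eq_of_sub_val_eq hyg))
    · exact Or.inl ((mem_cycArc_right_iff hg).mpr ⟨hy, hyg⟩)
  · exact absurd (hmax x hxy.symm hxab) hgx.not_ge
  · exact Or.inr (Or.inr rfl)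

end

/-- The state of the cop strategy: the arc from `a` to `b` is the robber's territory, the cops
`roles 0` and `roles 1` stand on `a` and `b`, and the free cop `roles 2` stands on `free`. -/
structure CopState (n : ℕ) where
  roles : Equiv.Perm (Fin 3)
  a : Fin n
  b : Fin n
  free : Fin n

namespace CopState

def pos (s : CopState n) (k : Fin 3) : Fin n := ![s.a, s.b, s.free] (s.roles⁻¹ k)

theorem forall_pos_ne_iff (s : CopState n) (x : Fin n) :
    (∀ k, s.pos k ≠ x) ↔ s.a ≠ x ∧ s.b ≠ x ∧ s.free ≠ x := by
  refine (s.roles⁻¹.surjective.forall (p := fun j => ![s.a, s.b, s.free] j ≠ x)).symm.trans ?_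
  simp [Fin.forall_fin_succ]

variable [NeZero n] {G : SimpleGraph (Fin n)}

noncomputable def next (G : SimpleGraph (Fin n)) (s : CopState n) (x : Fin n) : CopState n :=
  if s.free = farthestNbr G s.a s.b then
    if (x - s.a).val < (farthestNbr G s.a s.b - s.a).val then
      ⟨s.roles * Equiv.swap 1 2, s.a, farthestNbr G s.a s.b, s.b⟩
    else ⟨s.roles * Equiv.swap 0 2, farthestNbr G s.a s.b, s.b, s.a⟩
  else ⟨s.roles, s.a, s.b, s.free + 1⟩

/-- Lexicographic in the length of the territory and the free cop's distance to its target,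
which is below `n`. -/
noncomputable def potential (G : SimpleGraph (Fin n)) (s : CopState n) : ℕ :=
  n * (s.b - s.a).val + (farthestNbr G s.a s.b - s.free).val

theorem pos_next_of_free_eq {s : CopState n} (h : s.free = farthestNbr G s.a s.b) (x : Fin n) :
    (s.next G x).pos = s.pos := by
  funext k
  unfold next pos
  rw [if_pos h]
  split_ifs <;>
    simp only [mul_inv_rev, Equiv.swap_inv, Equiv.Perm.mul_apply] <;>
    generalize s.roles⁻¹ k = j <;> fin_cases j <;> simp [h, Equiv.swap_apply_def]

theorem stepRel_pos_next (hham : ∀ t : Fin n, G.Adj t (t + 1)) (s : CopState n) (x : Fin n)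
    (k : Fin 3) : stepRel G (s.pos k) ((s.next G x).pos k) := by
  by_cases h : s.free = farthestNbr G s.a s.b
  · rw [pos_next_of_free_eq h]; exact Or.inl rfl
  · unfold next pos
    rw [if_neg h]
    generalize s.roles⁻¹ k = j
    fin_cases j <;> simp [stepRel, hham]

theorem potential_lt_of_free_eq {s t : CopState n} (hs : s.free = farthestNbr G s.a s.b)
    (ht : (t.b - t.a).val < (s.b - s.a).val) : t.potential G < s.potential G := by
  have hd := (farthestNbr G t.a t.b - t.free).isLt
  calc t.potential G < n * (t.b - t.a).val + n := by unfold potential; omega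
    _ = n * ((t.b - t.a).val + 1) := by ring
    _ ≤ n * (s.b - s.a).val := Nat.mul_le_mul_left n ht
    _ = s.potential G := by simp [potential, hs]

theorem next_progress (hG : NoCrossingChords G) (hham : ∀ t : Fin n, G.Adj t (t + 1))
    {s : CopState n} (hs : ArcSealed G s.a s.b) {x : Fin n} (hx : x ∈ cycArc n s.a s.b)
    (hfree : s.free ≠ x) :
    ArcSealed G (s.next G x).a (s.next G x).b ∧ x ∈ cycArc n (s.next G x).a (s.next G x).b ∧
      (s.next G x).potential G < s.potential G := by
  obtain ⟨hag, hg, hmax⟩ := farthestNbr_spec (hham s.a) (add_one_mem_cycArc hx)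
  by_cases hfg : s.free = farthestNbr G s.a s.b
  · by_cases hxg : (x - s.a).val < (farthestNbr G s.a s.b - s.a).val
    · rw [next, if_pos hfg, if_pos hxg]
      exact ⟨hG.arcSealed hag, ⟨hx.1, hxg⟩, potential_lt_of_free_eq hfg hg.2⟩
    · rw [next, if_neg hxg, if_pos hfg]
      have hgx : (farthestNbr G s.a s.b - s.a).val < (x - s.a).val :=
        (not_lt.mp hxg).lt_of_ne fun e => hfree (hfg.trans (eq_of_sub_val_eq e))
      refine ⟨hs.of_farthest hG hag hg hmax, (mem_cycArc_right_iff hg).mpr ⟨hx, hgx⟩,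
        potential_lt_of_free_eq hfg ?_⟩
      rw [sub_val_sub_of_le hg.2.le]
      exact Nat.sub_lt_self hg.1 hg.2.le
  · rw [next, if_neg hfg]
    exact ⟨hs, hx, Nat.add_lt_add_left (sub_add_one_val_lt hfg) _⟩

end CopState

variable [NeZero n] {G : SimpleGraph (Fin n)}

theorem histList_succ {V : Type*} (r : ℕ → V) (t : ℕ) :
    histList r (t + 1) = histList r t ++ [r t] := by
  simp [histList, List.range_succ]

noncomputable def shrinkStrategy (G : SimpleGraph (Fin n)) (s₀ : CopState n) :
    List (Fin n) → Fin 3 → Fin n :=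
  fun h => (h.foldl (CopState.next G) s₀).pos

theorem validCopStrategy_shrinkStrategy (hham : ∀ t : Fin n, G.Adj t (t + 1))
    (s₀ : CopState n) : ValidCopStrategy G (shrinkStrategy G s₀) := by
  intro h x k
  simp only [shrinkStrategy, List.foldl_append, List.foldl_cons, List.foldl_nil]
  exact CopState.stepRel_pos_next hham _ x k

theorem not_legalPlayFrom_shrinkStrategy (hG : NoCrossingChords G)
    (hham : ∀ t : Fin n, G.Adj t (t + 1)) {s₀ : CopState n} (hs₀ : ArcSealed G s₀.a s₀.b)
    {r₀ : Fin n} (hr₀ : r₀ ∈ cycArc n s₀.a s₀.b) (hfree₀ : s₀.free ≠ r₀)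
    (r : ℕ → Fin n) :
    ¬ LegalPlayFrom G (shrinkStrategy G s₀) r₀ r := by
  rintro ⟨rfl, hstep, hcop⟩
  let S : ℕ → CopState n := fun t => (histList r t).foldl (CopState.next G) s₀
  have hS : ∀ t, S (t + 1) = (S t).next G (r t) := fun t => by simp [S, histList_succ]
  have hcopS t := (CopState.forall_pos_ne_iff (S (t + 1)) (r (t + 1))).mp (hcop t)
  have hinv : ∀ t, ArcSealed G (S t).a (S t).b ∧ r t ∈ cycArc n (S t).a (S t).b ∧
      (S t).free ≠ r t := by
    intro t
    induction t with
    | zero => exact ⟨hs₀, hr₀, hfree₀⟩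
    | succ t ih =>
      obtain ⟨hsealed, hmem, -⟩ := CopState.next_progress hG hham ih.1 ih.2.1 ih.2.2
      obtain ⟨ha, hb, hfree⟩ := hcopS t
      rw [hS] at ha hb hfree ⊢
      exact ⟨hsealed, hsealed.mem_of_stepRel hmem (hstep t) ha.symm hb.symm, hfree⟩
  obtain ⟨t, ht⟩ := WellFounded.not_rel_apply_succ (r := (· < ·)) fun t => (S t).potential G
  obtain ⟨hsealed, hmem, hfree⟩ := hinv t
  exact ht (hS t ▸ (CopState.next_progress hG hham hsealed hmem hfree).2.2)

end OuterplanarSurrounding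

theorem outerplanar_shrink_robber_territory_general {n : ℕ} [NeZero n]
    (G : SimpleGraph (Fin n)) (hham : ∀ t : Fin n, G.Adj t (t + 1))
    (hnocross : ∀ a b c d : Fin n, IsChord G a b → IsChord G c d →
      a < c → c < b → b < d → False)
    (i j : Fin n) (hedge : G.Adj i j)
    (r0 : Fin n) (hr0 : r0 ∈ cycArc n i j) (c3 : Fin n) (hc3 : c3 ≠ r0) :
    ∃ F : List (Fin n) → Fin 3 → Fin n,
      F [] = ![i, j, c3] ∧ ValidCopStrategy G F ∧
        ∀ r : ℕ → Fin n, LegalPlayFrom G F r0 r →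
          (∀ t, r t ∈ cycArc n i j) ∧
          ∃ T : ℕ, SurroundedAt G F r T ∨
            ∃ k l : Fin n, G.Adj k l ∧
              (∃ i1 i2 : Fin 3, i1 ≠ i2 ∧
                F (histList r T) i1 = k ∧ F (histList r T) i2 = l) ∧
              r T ∈ cycArc n k l ∧ cycArc n k l ⊂ cycArc n i j := by
  open OuterplanarSurrounding in
  refine ⟨shrinkStrategy G ⟨1, i, j, c3⟩, ?_, validCopStrategy_shrinkStrategy hham _,
    fun r hr => absurd hr ?_⟩
  · funext k
    simp [shrinkStrategy, CopState.pos]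
  · exact not_legalPlayFrom_shrinkStrategy hnocross hham
      (NoCrossingChords.arcSealed hnocross hedge) hr0 hc3 r

/-- Let `n ≥ 4` and let `G` be a simple graph on the vertices
`v_0, …, v_{n-1}` (here `Fin n`) containing the Hamiltonian cycle
`v_0 v_1 ⋯ v_{n-1} v_0`, in which no two chords cross.  Suppose that in the game of
Surrounding Cops and Robbers on `G` a position is reached in which two cops occupy
the endpoints of an edge `v_i v_j` of `G` and the robber occupies a vertex `r0` of
the arc `X = {v_{i+1}, …, v_{j-1}}` (indices modulo `n`); the third cop stands at an
arbitrary vertex `c3`.  Then the cop player, using these two cops together with the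
one additional cop, has a strategy guaranteeing that the robber never occupies a
vertex outside `X`, and that after a finite number of moves either the robber is
surrounded or a position is reached in which two cops occupy the endpoints of an
edge `v_k v_l` of `G` and the robber occupies a vertex of the arc
`{v_{k+1}, …, v_{l-1}}`, which is a proper subset of `X`. -/
theorem outerplanar_shrink_robber_territory {n : ℕ} [NeZero n] (hn : 4 ≤ n)
    (G : SimpleGraph (Fin n)) (hham : ∀ t : Fin n, G.Adj t (t + 1))
    (hnocross : ∀ a b c d : Fin n, IsChord G a b → IsChord G c d →
      a < c → c < b → b < d → False)
    (i j : Fin n) (hedge : G.Adj i j)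
    (r0 : Fin n) (hr0 : r0 ∈ cycArc n i j) (c3 : Fin n) (hc3 : c3 ≠ r0) :
    ∃ F : List (Fin n) → Fin 3 → Fin n,
      F [] = ![i, j, c3] ∧ ValidCopStrategy G F ∧
        ∀ r : ℕ → Fin n, LegalPlayFrom G F r0 r →
          (∀ t, r t ∈ cycArc n i j) ∧
          ∃ T : ℕ, SurroundedAt G F r T ∨
            ∃ k l : Fin n, G.Adj k l ∧
              (∃ i1 i2 : Fin 3, i1 ≠ i2 ∧
                F (histList r T) i1 = k ∧ F (histList r T) i2 = l) ∧
              r T ∈ cycArc n k l ∧ cycArc n k l ⊂ cycArc n i j :=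
  outerplanar_shrink_robber_territory_general G hham hnocross i j hedge r0 hr0 c3 hc3
end
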